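/- arXiv:1010.1455 — 2 statements merged into one kernel-verified Lean document; each statement's English description precedes it below -/
import Mathlib

section
/- In Nim on graphs played on a cycle with an odd number of edges, all edges having positive integer weight, the first player has a winning strategy from any starting vertex: the first player wins by reducing either incident edge's weight to zero, leaving the opponent at an endpoint of a path with an even number of edges. -/
/-- A position of Nim on graphs: a symmetric non-negative integer weight
function on pairs of vertices (the weighted graph; weight-zero pairs are
non-edges) plus the location of the indicator piece. -/
structure NimPos (V : Type) where
  w : V → V → ℕ
  symm : ∀ u v, w u v = w v u
  pos : V

/-- A legal move: decrease the weight of an edge incident with the piece to a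
strictly smaller value and move the piece along it; all other weights stay. -/
def NimMove {V : Type} (p q : NimPos V) : Prop :=
  p.pos ≠ q.pos ∧
  q.w p.pos q.pos < p.w p.pos q.pos ∧
  ∀ u v, ¬((u = p.pos ∧ v = q.pos) ∨ (u = q.pos ∧ v = p.pos)) → q.w u v = p.w u v

/-- The player to move loses (the position is a 0-position): the opponent has
a winning strategy `f` answering every move. -/
inductive MoverLoses {V : Type} : NimPos V → Prop
  | intro (p : NimPos V) (f : ∀ q, NimMove p q → NimPos V)
      (hmove : ∀ q (h : NimMove p q), NimMove q (f q h))
      (hwin : ∀ q (h : NimMove p q), MoverLoses (f q h)) : MoverLoses p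

/-- The player to move wins (the position is a p-position). -/
def MoverWins {V : Type} (p : NimPos V) : Prop :=
  ∃ q, NimMove p q ∧ MoverLoses q

/-- Weights of the path on vertices `0,…,n` of `Fin (n+1)`: edge `i — i+1` has weight `ω i`. -/
def pathW (n : ℕ) (ω : ℕ → ℕ) (u v : Fin (n+1)) : ℕ :=
  if u.val + 1 = v.val then ω u.val
  else if v.val + 1 = u.val then ω v.val else 0

theorem pathW_symm (n : ℕ) (ω : ℕ → ℕ) : ∀ u v, pathW n ω u v = pathW n ω v u := by
  intro u v; unfold pathW; split_ifs <;> first | rfl | (exfalso; omega)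

/-- Weights of the cycle on `Fin m` (`m ≥ 3`): edge `i — (i+1) % m` has weight `ω i`. -/
def cycW (m : ℕ) (ω : ℕ → ℕ) (u v : Fin m) : ℕ :=
  (if (u.val + 1) % m = v.val then ω u.val else 0) +
  (if (v.val + 1) % m = u.val then ω v.val else 0)

theorem cycW_symm (m : ℕ) (ω : ℕ → ℕ) : ∀ u v, cycW m ω u v = cycW m ω v u :=
  fun _ _ => Nat.add_comm _ _

/-- Weight-1 complete bipartite graph `K_{2,j}`: part `{0,1}` and part `{2,…,j+1}`. -/
def k2W (j : ℕ) (u v : Fin (j+2)) : ℕ :=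
  if (u.val < 2 ∧ 2 ≤ v.val) ∨ (v.val < 2 ∧ 2 ≤ u.val) then 1 else 0

theorem k2W_symm (j : ℕ) : ∀ u v, k2W j u v = k2W j v u := by
  intro u v; unfold k2W; split_ifs <;> omega

/-- Weight-1 `SSB_j = K_{2,j} + e_{12}`: `K_{2,j}` plus the edge `0 — 1`. -/
def ssbW (j : ℕ) (u v : Fin (j+2)) : ℕ :=
  if ((u.val < 2 ∧ 2 ≤ v.val) ∨ (v.val < 2 ∧ 2 ≤ u.val)) ∨
      (u.val < 2 ∧ v.val < 2 ∧ u.val ≠ v.val) then 1 else 0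

theorem ssbW_symm (j : ℕ) : ∀ u v, ssbW j u v = ssbW j v u := by
  intro u v; unfold ssbW; split_ifs <;> omega

/-- Weight-1 complete graph `K_n`. -/
def knW (n : ℕ) (u v : Fin n) : ℕ := if u.val ≠ v.val then 1 else 0

theorem knW_symm (n : ℕ) : ∀ u v, knW n u v = knW n v u := by
  intro u v; unfold knW; split_ifs <;> omega

/-- Length of the maximal all-positive run of cycle edges clockwise from vertex `s`. -/
noncomputable def fwdLen (m : ℕ) (w : ℕ → ℕ) (s : ℕ) : ℕ :=
  sSup {d | d ≤ m ∧ ∀ i < d, 0 < w ((s + i) % m)}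

/-- Length of the maximal all-positive run of cycle edges counterclockwise from vertex `s`. -/
noncomputable def bwdLen (m : ℕ) (w : ℕ → ℕ) (s : ℕ) : ℕ :=
  sSup {d | d ≤ m ∧ ∀ i < d, 0 < w ((s + m - 1 - i) % m)}

/-!
Cutting an edge at the piece turns the odd cycle into a path with an even number of edges,
with the opponent to move from one of its ends. Such a position is lost for the mover, by
induction on the length of the path.
-/

namespace NimPos

variable {V : Type} [DecidableEq V]

def play (p : NimPos V) (v : V) (a : ℕ) : NimPos V where
  w x y := if (x = p.pos ∧ y = v) ∨ (x = v ∧ y = p.pos) then a else p.w x y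
  symm x y := by
    by_cases h : (x = p.pos ∧ y = v) ∨ (x = v ∧ y = p.pos)
    · rw [if_pos h, if_pos (by tauto)]
    · rw [if_neg h, if_neg (by tauto), p.symm]
  pos := v

variable (p : NimPos V) (v : V) (a : ℕ)

@[simp]
theorem play_pos : (p.play v a).pos = v := rfl

theorem play_w_of_not_crossed {x y : V} (h : ¬((x = p.pos ∧ y = v) ∨ (x = v ∧ y = p.pos))) :
    (p.play v a).w x y = p.w x y :=
  if_neg h

@[simp]
theorem play_w_pos_self : (p.play v a).w p.pos v = a :=
  if_pos (Or.inl ⟨rfl, rfl⟩)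

@[simp]
theorem play_w_self_pos : (p.play v a).w v p.pos = a :=
  if_pos (Or.inr ⟨rfl, rfl⟩)

theorem play_w_le {a : ℕ} (ha : a ≤ p.w p.pos v) (x y : V) :
    (p.play v a).w x y ≤ p.w x y := by
  by_cases h : (x = p.pos ∧ y = v) ∨ (x = v ∧ y = p.pos)
  · rcases h with ⟨rfl, rfl⟩ | ⟨rfl, rfl⟩
    · simpa using ha
    · simpa [p.symm x] using ha
  · exact (play_w_of_not_crossed p v a h).le

theorem nimMove_play_iff : NimMove p (p.play v a) ↔ p.pos ≠ v ∧ a < p.w p.pos v :=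
  ⟨fun ⟨hne, hlt, _⟩ => ⟨hne, by simpa using hlt⟩,
    fun ⟨hne, hlt⟩ =>
      ⟨hne, by simpa using hlt, fun _ _ h => play_w_of_not_crossed p v a h⟩⟩

end NimPos

theorem NimMove.eq_play {V : Type} [DecidableEq V] {p q : NimPos V} (h : NimMove p q) :
    q = p.play q.pos (q.w p.pos q.pos) := by
  obtain ⟨-, -, hframe⟩ := h
  cases q with
  | mk w symm pos =>
    simp only [NimPos.play, NimPos.mk.injEq, and_true]
    funext x y
    split_ifs with hxy
    · rcases hxy with ⟨rfl, rfl⟩ | ⟨rfl, rfl⟩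
      · rfl
      · exact symm _ _
    · exact hframe x y hxy

theorem MoverLoses.of_forall_moverWins {V : Type} {p : NimPos V}
    (h : ∀ q, NimMove p q → MoverWins q) : MoverLoses p := by
  choose f hmove hwin using h
  exact .intro p f hmove hwin

theorem MoverLoses.of_forall_w_eq_zero {V : Type} {p : NimPos V}
    (h : ∀ u, p.w p.pos u = 0) : MoverLoses p :=
  .of_forall_moverWins fun q hq => absurd hq.2.1 (by simp [h])

section PathComponent

variable {V : Type}

structure IsPathComponent (w : V → V → ℕ) (f : ℕ → V) (k : ℕ) : Prop where
  injOn : Set.InjOn f (Set.Iic k)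
  w_pos : ∀ i < k, 0 < w (f i) (f (i + 1))
  eq_of_w_pos :
    ∀ i ≤ k, ∀ u, 0 < w (f i) u → ∃ j ≤ k, u = f j ∧ (j = i + 1 ∨ i = j + 1)

theorem IsPathComponent.eq_iff {w : V → V → ℕ} {f : ℕ → V} {k : ℕ}
    (hf : IsPathComponent w f k) {i j : ℕ} (hi : i ≤ k) (hj : j ≤ k) : f i = f j ↔ i = j :=
  hf.injOn.eq_iff hi hj

variable [DecidableEq V]

theorem IsPathComponent.play_play {p : NimPos V} {f : ℕ → V} {k : ℕ}
    (hf : IsPathComponent p.w f (k + 2)) (hp : p.pos = f 0) :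
    IsPathComponent ((p.play (f 1) 0).play (f 2) 0).w (fun i => f (i + 2)) k := by
  have hle : ∀ x y, ((p.play (f 1) 0).play (f 2) 0).w x y ≤ p.w x y := fun x y =>
    (NimPos.play_w_le _ _ (Nat.zero_le _) x y).trans (NimPos.play_w_le _ _ (Nat.zero_le _) x y)
  refine ⟨fun i hi j hj h => ?_, fun i hi => ?_, fun i hi u hu => ?_⟩
  · exact Nat.add_right_cancel
      ((hf.eq_iff (Nat.add_le_add_right hi 2) (Nat.add_le_add_right hj 2)).1 h)
  · have hfar : ∀ j ≤ 2, f (i + 2 + 1) ≠ f j := fun j hj => by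
      rw [Ne, hf.eq_iff (by omega) (by omega)]; omega
    rw [NimPos.play_w_of_not_crossed, NimPos.play_w_of_not_crossed]
    · exact hf.w_pos (i + 2) (by omega)
    · rw [hp]; rintro (⟨-, h⟩ | ⟨-, h⟩) <;> exact hfar _ (by omega) h
    · rintro (⟨-, h⟩ | ⟨-, h⟩) <;> exact hfar _ (by omega) h
  · obtain ⟨j, hj, rfl, hij⟩ := hf.eq_of_w_pos (i + 2) (by omega) u (hu.trans_le (hle _ _))
    rcases hij with rfl | hij
    · exact ⟨i + 1, by omega, rfl, Or.inl rfl⟩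
    obtain rfl | hi0 := Nat.eq_zero_or_pos i
    · obtain rfl : j = 1 := by omega
      exact absurd hu (by simpa using NimPos.play_w_self_pos (p.play (f 1) 0) (f 2) 0)
    · exact ⟨i - 1, by omega, by congr 1; omega, Or.inr (by omega)⟩

theorem IsPathComponent.moverLoses {p : NimPos V} {f : ℕ → V} {k : ℕ} (hk : Even k)
    (hf : IsPathComponent p.w f k) (hp : p.pos = f 0) : MoverLoses p := by
  obtain ⟨n, rfl⟩ := hk
  induction n generalizing p f with
  | zero =>
    refine .of_forall_w_eq_zero fun u => Nat.eq_zero_of_not_pos fun hu => ?_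
    obtain ⟨j, hj, -, hij⟩ := hf.eq_of_w_pos 0 le_rfl u (hp ▸ hu)
    omega
  | succ n ih =>
    replace hf : IsPathComponent p.w f (n + n + 2) := by
      rwa [show n + n + 2 = n + 1 + (n + 1) by omega]
    have hnbr : ∀ u, 0 < p.w p.pos u → u = f 1 := fun u hu => by
      obtain ⟨j, hj, rfl, hij⟩ := hf.eq_of_w_pos 0 (by omega) u (hp ▸ hu)
      obtain rfl : j = 1 := by omega
      rfl
    have hf01 : f 0 ≠ f 1 := by rw [Ne, hf.eq_iff (by omega) (by omega)]; omega
    have hf12 : f 1 ≠ f 2 := by rw [Ne, hf.eq_iff (by omega) (by omega)]; omega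
    have hf02 : f 0 ≠ f 2 := by rw [Ne, hf.eq_iff (by omega) (by omega)]; omega
    have hp1 : p.pos ≠ f 1 := hp ▸ hf01
    suffices h : ∀ a, MoverWins (p.play (f 1) a) from
      .of_forall_moverWins fun q hq => by
        rw [hq.eq_play, hnbr _ (Nat.zero_lt_of_lt hq.2.1)]
        exact h _
    intro a
    obtain rfl | ha := Nat.eq_zero_or_pos a
    · -- the opponent cut the first edge: cut the second one and walk two steps down the path
      refine ⟨_, (NimPos.nimMove_play_iff _ _ _).2 ⟨hf12, ?_⟩, ih rfl (hf.play_play hp)⟩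
      rw [NimPos.play_pos, NimPos.play_w_of_not_crossed _ _ _ (by rw [hp]; tauto)]
      exact hf.w_pos 1 (by omega)
    · -- the opponent left weight on the first edge: remove it and stand on an isolated vertex
      refine ⟨_, (NimPos.nimMove_play_iff _ _ _).2 ⟨hp1.symm, by simpa using ha⟩,
        .of_forall_w_eq_zero fun u => ?_⟩
      by_cases hu : u = f 1
      · simpa [hu] using NimPos.play_w_self_pos (p.play (f 1) a) p.pos 0
      · rw [NimPos.play_w_of_not_crossed _ _ _ (by simp only [NimPos.play_pos]; tauto),
          NimPos.play_w_of_not_crossed _ _ _ (by tauto)]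
        exact Nat.eq_zero_of_not_pos fun h => hu (hnbr u h)

end PathComponent

section Cycle

open Fin.CommRing

variable {m : ℕ} [NeZero m] {ω : ℕ → ℕ}

theorem cycW_eq (u v : Fin m) :
    cycW m ω u v = (if u + 1 = v then ω u else 0) + (if v + 1 = u then ω v else 0) := by
  simp only [cycW, Fin.ext_iff, Fin.val_add, Fin.val_one', Nat.add_mod_mod]

theorem cycW_pos_iff (hω : ∀ i < m, 0 < ω i) (u v : Fin m) :
    0 < cycW m ω u v ↔ u + 1 = v ∨ v + 1 = u := by
  have hu := hω u u.isLt
  have hv := hω v v.isLt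
  rw [cycW_eq]
  split_ifs <;> simp_all

theorem cycW_pos_iff_of_step (hω : ∀ i < m, 0 < ω i) {d : Fin m} (hd : d = 1 ∨ d = -1)
    (u v : Fin m) : 0 < cycW m ω u v ↔ u + d = v ∨ v + d = u := by
  rw [cycW_pos_iff hω]
  rcases hd with rfl | rfl
  · rfl
  · simp only [← sub_eq_add_neg, sub_eq_iff_eq_add]
    tauto

-- The cycle read from `v` in the direction away from `s`, reaching `s` after `m - 1` steps.
theorem isPathComponent_play_cycle (hm : 3 ≤ m) (hω : ∀ i < m, 0 < ω i) {s v : Fin m}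
    (hsv : 0 < cycW m ω s v) :
    IsPathComponent (NimPos.play ⟨cycW m ω, cycW_symm m ω, s⟩ v 0).w
      (fun i => v + i * (v - s)) (m - 1) := by
  set d := v - s with hd_def
  have hd : d = 1 ∨ d = -1 := by
    rcases (cycW_pos_iff hω s v).1 hsv with h | h
    · left; rw [hd_def, ← h]; ring
    · right; rw [hd_def, ← h]; ring
  have hadj := cycW_pos_iff_of_step hω hd
  set f : ℕ → Fin m := fun i => v + i * d
  have hsucc : ∀ i, f (i + 1) = f i + d := fun i => by simp only [f]; push_cast; ring
  have hfirst : f 0 = v := by simp [f]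
  have hlast : f (m - 1) = s := by
    simp only [f, Nat.cast_sub NeZero.one_le, Fin.natCast_self, Nat.cast_one, hd_def]
    ring
  have hinj : ∀ i ≤ m - 1, ∀ j ≤ m - 1, f i = f j ↔ i = j := by
    intro i hi j hj
    refine ⟨fun h => ?_, congrArg f⟩
    have hdd : d * d = 1 := by rcases hd with h | h <;> simp [h]
    have hij : (i : Fin m) = j := by
      simpa [hdd, mul_assoc] using congrArg (· * d) (add_left_cancel h)
    simpa [Fin.ext_iff, Fin.val_natCast, Nat.mod_eq_of_lt (show i < m by omega),
      Nat.mod_eq_of_lt (show j < m by omega)] using hij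
  set p : NimPos (Fin m) := ⟨cycW m ω, cycW_symm m ω, s⟩
  have hle : ∀ x y, (p.play v 0).w x y ≤ cycW m ω x y := p.play_w_le v (Nat.zero_le _)
  have hsv0 : (p.play v 0).w s v = 0 := p.play_w_pos_self v 0
  have hvs0 : (p.play v 0).w v s = 0 := p.play_w_self_pos v 0
  refine ⟨fun i hi j hj h => (hinj i hi j hj).1 h, fun i hi => ?_, fun i hi u hu => ?_⟩
  · rw [NimPos.play_w_of_not_crossed, hsucc]
    · exact (hadj _ _).2 (Or.inl rfl)
    · change ¬((f i = s ∧ f (i + 1) = v) ∨ (f i = v ∧ f (i + 1) = s))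
      rw [← hlast, ← hfirst, hinj _ (by omega) _ (by omega), hinj _ (by omega) _ (by omega),
        hinj _ (by omega) _ (by omega), hinj _ (by omega) _ (by omega)]
      omega
  · rcases (hadj _ _).1 (hu.trans_le (hle _ _)) with h | h
    · by_cases hi' : i < m - 1
      · exact ⟨i + 1, hi', by rw [hsucc, h], Or.inl rfl⟩
      · obtain rfl : i = m - 1 := by omega
        rw [hlast, hd_def, add_sub_cancel] at h
        rw [← h, hlast] at hu
        exact absurd hsv0 hu.ne'
    · rcases i with _ | j
      · rw [hfirst, ← eq_sub_iff_add_eq, hd_def, sub_sub_cancel] at h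
        rw [h, hfirst] at hu
        exact absurd hvs0 hu.ne'
      · rw [hsucc, add_left_inj] at h
        exact ⟨j, by omega, h, Or.inr rfl⟩

end Cycle

/-- Nim on a cycle with an odd number `m` of edges, all weights
positive: from any starting vertex the first player wins, and indeed any first
move reducing the crossed incident edge to weight zero (leaving the opponent at
the endpoint of an even path) is a winning move. -/
theorem stmt3 (m : ℕ) (hm : 3 ≤ m) (hodd : Odd m) (ω : ℕ → ℕ)
    (hω : ∀ i < m, 0 < ω i) (s : Fin m) :
    MoverWins ⟨cycW m ω, cycW_symm m ω, s⟩ ∧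
    ∀ q, NimMove ⟨cycW m ω, cycW_symm m ω, s⟩ q → q.w s q.pos = 0 →
      MoverLoses q := by
  have : NeZero m := ⟨by omega⟩
  have hloses : ∀ q, NimMove ⟨cycW m ω, cycW_symm m ω, s⟩ q → q.w s q.pos = 0 →
      MoverLoses q := by
    intro q hq hq0
    have hpath := isPathComponent_play_cycle hm hω (Nat.zero_lt_of_lt hq.2.1)
    rw [hq.eq_play, show q.w _ q.pos = 0 from hq0]
    exact hpath.moverLoses (Nat.Odd.sub_odd hodd odd_one) (by simp)
  have hstep : s ≠ s + 1 := by simpa [Fin.ext_iff] using show m ≠ 1 by omega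
  have hmove := (NimPos.nimMove_play_iff ⟨cycW m ω, cycW_symm m ω, s⟩ (s + 1) 0).2
    ⟨hstep, (cycW_pos_iff hω _ _).2 (Or.inl rfl)⟩
  exact ⟨⟨_, hmove, hloses _ hmove (NimPos.play_w_pos_self _ _ _)⟩, hloses⟩
end

section
/- In Nim on graphs played on an even cycle C_{2n} in which every edge has the same weight k ≥ 1, the second player has a winning strategy from any starting vertex. -/
namespace NimPos

variable {V : Type}

def moveTo [DecidableEq V] (p : NimPos V) (v : V) (b : ℕ) : NimPos V where
  w x y := if s(x, y) = s(p.pos, v) then b else p.w x y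
  symm x y := by rw [Sym2.eq_swap, p.symm]
  pos := v

def totalWeight [Fintype V] (p : NimPos V) : ℕ := ∑ u, ∑ v, p.w u v

lemma nimMove_moveTo [DecidableEq V] {p : NimPos V} {v : V} {b : ℕ} (hv : p.pos ≠ v)
    (hb : b < p.w p.pos v) : NimMove p (p.moveTo v b) := by
  refine ⟨hv, by simpa [moveTo] using hb, fun x y hxy => ?_⟩
  rw [← Sym2.eq_iff] at hxy
  exact if_neg hxy

end NimPos

namespace NimMove

variable {V : Type} {p q : NimPos V}

lemma w_le (h : NimMove p q) (u v : V) : q.w u v ≤ p.w u v := by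
  obtain ⟨-, hlt, hrest⟩ := h
  by_cases huv : s(u, v) = s(p.pos, q.pos)
  · rcases Sym2.eq_iff.mp huv with ⟨rfl, rfl⟩ | ⟨rfl, rfl⟩
    · exact hlt.le
    · rw [p.symm, q.symm]
      exact hlt.le
  · exact (hrest u v (Sym2.eq_iff.not.mp huv)).le

lemma totalWeight_lt [Fintype V] (h : NimMove p q) : q.totalWeight < p.totalWeight :=
  Finset.sum_lt_sum (fun u _ => Finset.sum_le_sum fun v _ => h.w_le u v)
    ⟨p.pos, Finset.mem_univ _,
      Finset.sum_lt_sum (fun v _ => h.w_le _ v) ⟨q.pos, Finset.mem_univ _, h.2.1⟩⟩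

end NimMove

theorem moverLoses_of_invariant {V : Type} [Fintype V] (Good : NimPos V → Prop)
    (hGood : ∀ p q, Good p → NimMove p q → ∃ r, NimMove q r ∧ Good r) {p : NimPos V}
    (hp : Good p) : MoverLoses p := by
  induction h : p.totalWeight using Nat.strong_induction_on generalizing p with
  | _ N ih =>
    choose f hf using hGood p
    refine .intro p (fun q hq => f q hp hq) (fun q hq => (hf q hp hq).1) fun q hq => ?_
    refine ih _ ?_ (hf q hp hq).2 rfl
    exact h ▸ ((hf q hp hq).1.totalWeight_lt.trans hq.totalWeight_lt)

namespace CycleNim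

section Sequences

-- After the piece crosses the first edge of a view `x`, leaving weight `a` on it, the new view
-- is `shift m x a`: that edge now comes last.
def shift (m : ℕ) (x : ℕ → ℕ) (a i : ℕ) : ℕ :=
  if i + 1 < m then x (i + 1) else if i + 1 = m then a else 0

def rev (m : ℕ) (x : ℕ → ℕ) (i : ℕ) : ℕ :=
  if i < m then x (m - 1 - i) else 0

def Paired (n : ℕ) (x : ℕ → ℕ) : Prop :=
  ∀ i < n, x (2 * i) = x (2 * i + 1) ∧ 0 < x (2 * i)

def EvenRun (n : ℕ) (x : ℕ → ℕ) : Prop :=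
  x (2 * n - 1) = 0 ∧ ∃ d, Even d ∧ d < 2 * n ∧ (∀ i < d, 0 < x i) ∧ x d = 0

def Balanced (n : ℕ) (x : ℕ → ℕ) : Prop :=
  Paired n x ∨ EvenRun n x ∨ EvenRun n (rev (2 * n) x)

variable {m n a i : ℕ} {x : ℕ → ℕ}

lemma shift_of_lt (h : i + 1 < m) : shift m x a i = x (i + 1) := if_pos h

lemma shift_of_eq (h : i + 1 = m) : shift m x a i = a := by
  rw [shift, if_neg h.not_lt, if_pos h]

lemma shift_shift_of_lt {b : ℕ} (h : i + 2 < m) : shift m (shift m x a) b i = x (i + 2) := by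
  rw [shift_of_lt (by omega), shift_of_lt h]

lemma rev_of_lt (h : i < m) : rev m x i = x (m - 1 - i) := if_pos h

lemma Paired.pos (h : Paired n x) {i : ℕ} (hi : i < 2 * n) : 0 < x i := by
  rcases Nat.even_or_odd' i with ⟨j, rfl | rfl⟩
  · exact (h j (by omega)).2
  · exact (h j (by omega)).1 ▸ (h j (by omega)).2

lemma paired_rev (h : Paired n x) : Paired n (rev (2 * n) x) := by
  intro i hi
  obtain ⟨heq, hpos⟩ := h (n - 1 - i) (by omega)
  rw [rev_of_lt (by omega), rev_of_lt (by omega),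
    show 2 * n - 1 - 2 * i = 2 * (n - 1 - i) + 1 by omega,
    show 2 * n - 1 - (2 * i + 1) = 2 * (n - 1 - i) by omega]
  exact ⟨heq.symm, heq ▸ hpos⟩

lemma balanced_rev (h : Balanced n x) (hx : rev (2 * n) (rev (2 * n) x) = x) :
    Balanced n (rev (2 * n) x) := by
  rcases h with h | h | h
  · exact Or.inl (paired_rev h)
  · exact Or.inr (Or.inr (by rwa [hx]))
  · exact Or.inr (Or.inl h)

lemma Paired.balanced_shift_shift (h : Paired n x) (hn : 2 ≤ n) :
    Balanced n (shift (2 * n) (shift (2 * n) x a) a) := by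
  have hlast : shift (2 * n) (shift (2 * n) x a) a (2 * n - 2) = a := by
    rw [shift_of_lt (by omega), shift_of_eq (by omega)]
  rcases Nat.eq_zero_or_pos a with rfl | ha
  · refine Or.inr (Or.inl ⟨shift_of_eq (by omega), 2 * n - 2, ⟨n - 1, by omega⟩, by omega,
      fun i hi => ?_, hlast⟩)
    rw [shift_shift_of_lt (by omega)]
    exact h.pos (by omega)
  · refine Or.inl fun i hi => ?_
    by_cases hi' : i + 1 < n
    · rw [shift_shift_of_lt (by omega), shift_shift_of_lt (by omega)]
      exact h (i + 1) hi'
    · rw [show 2 * i = 2 * n - 2 by omega, hlast, shift_of_eq (by omega)]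
      exact ⟨rfl, ha⟩

lemma EvenRun.exists_response (h : EvenRun n x) (ha : a < x 0) :
    ∃ z, (z = shift (2 * n) x a ∨ z = rev (2 * n) (shift (2 * n) x a)) ∧
      ∃ b < z 0, Balanced n (shift (2 * n) z b) := by
  obtain ⟨hback, d, ⟨j, rfl⟩, hd, hrun, hzero⟩ := h
  have hj : 0 < j := Nat.pos_of_ne_zero fun hj => by simp [hj] at hzero; omega
  rcases Nat.eq_zero_or_pos a with rfl | ha
  · refine ⟨_, Or.inl rfl, 0, ?_,
      Or.inr (Or.inl ⟨?_, j + j - 2, ⟨j - 1, by omega⟩, by omega, fun i hi => ?_, ?_⟩)⟩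
    · rw [shift_of_lt (by omega)]
      exact hrun 1 (by omega)
    · rw [shift_of_eq (by omega)]
    · rw [shift_of_lt (by omega), shift_of_lt (by omega)]
      exact hrun _ (by omega)
    · rw [shift_of_lt (by omega), shift_of_lt (by omega), show j + j - 2 + 1 + 1 = j + j by omega]
      exact hzero
  · refine ⟨_, Or.inr rfl, 0, ?_,
      Or.inr (Or.inr ⟨?_, 0, ⟨0, rfl⟩, by omega, by simp, ?_⟩)⟩
    · rwa [rev_of_lt (by omega), shift_of_eq (by omega)]
    · rw [rev_of_lt (by omega), shift_of_lt (by omega), rev_of_lt (by omega),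
        shift_of_lt (by omega),
        show 2 * n - 1 - (2 * n - 1 - (2 * n - 1) + 1) + 1 = 2 * n - 1 by omega]
      exact hback
    · rw [rev_of_lt (by omega), shift_of_eq (by omega)]

theorem Balanced.exists_response (h : Balanced n x) (hn : 2 ≤ n) (ha : a < x 0) :
    ∃ z, (z = shift (2 * n) x a ∨ z = rev (2 * n) (shift (2 * n) x a)) ∧
      ∃ b < z 0, Balanced n (shift (2 * n) z b) := by
  rcases h with h | h | ⟨hback, -⟩
  · refine ⟨_, Or.inl rfl, a, ?_, h.balanced_shift_shift hn⟩
    rw [shift_of_lt (by omega), ← (h 0 (by omega)).1]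
    exact ha
  · exact h.exists_response ha
  · rw [rev_of_lt (by omega), show 2 * n - 1 - (2 * n - 1) = 0 by omega] at hback
    omega

end Sequences

section Views

open Fin.CommRing

variable {m : ℕ} [NeZero m]

lemma isUnit_of_eq_one_or_eq_neg_one {R : Type*} [Ring R] {δ : R} (hδ : δ = 1 ∨ δ = -1) :
    IsUnit δ := by
  rcases hδ with rfl | rfl
  exacts [isUnit_one, isUnit_one.neg]

def OnCycle (p : NimPos (Fin m)) : Prop :=
  ∀ u v, 0 < p.w u v → v = u + 1 ∨ v = u - 1

lemma OnCycle.of_nimMove {p q : NimPos (Fin m)} (hp : OnCycle p) (h : NimMove p q) :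
    OnCycle q :=
  fun u v huv => hp u v (huv.trans_le (h.w_le u v))

-- `view p δ i` is the weight of the `i`-th edge met walking from the piece in steps of `δ`. It is
-- padded with zeros from `m` on, so that `view_neg` and `view_of_nimMove` are equalities.
def view (p : NimPos (Fin m)) (δ : Fin m) (i : ℕ) : ℕ :=
  if i < m then p.w (p.pos + i * δ) (p.pos + (i + 1) * δ) else 0

lemma view_of_lt (p : NimPos (Fin m)) (δ : Fin m) {i : ℕ} (hi : i < m) :
    view p δ i = p.w (p.pos + i * δ) (p.pos + (i + 1) * δ) := if_pos hi

lemma view_zero (p : NimPos (Fin m)) (δ : Fin m) : view p δ 0 = p.w p.pos (p.pos + δ) := by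
  simp [view_of_lt p δ (NeZero.pos m)]

lemma view_neg (p : NimPos (Fin m)) (δ : Fin m) : view p (-δ) = rev m (view p δ) := by
  funext i
  by_cases hi : i < m
  · have hcast : ((m - 1 - i : ℕ) : Fin m) = -1 - i := by
      rw [Nat.cast_sub (by omega), Nat.cast_sub (by omega), Fin.natCast_self, Nat.cast_one,
        zero_sub]
    rw [rev_of_lt hi, view_of_lt _ _ hi, view_of_lt _ _ (by omega), p.symm, hcast]
    congr 2 <;> ring
  · rw [view, rev, if_neg hi, if_neg hi]

lemma natCast_mul_inj {δ : Fin m} (hδ : IsUnit δ) {j k : ℕ} (hj : j < m) (hk : k < m) :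
    (j : Fin m) * δ = k * δ ↔ j = k := by
  rw [hδ.mul_left_inj, Fin.ext_iff, Fin.val_natCast, Fin.val_natCast, Nat.mod_eq_of_lt hj,
    Nat.mod_eq_of_lt hk]

lemma view_of_nimMove (hm : 3 ≤ m) {p q : NimPos (Fin m)} {δ : Fin m} (hδ : IsUnit δ)
    (h : NimMove p q) (hq : q.pos = p.pos + δ) :
    view q δ = shift m (view p δ) (q.w p.pos q.pos) := by
  funext i
  rcases lt_trichotomy (i + 1) m with hi | hi | hi
  · rw [shift_of_lt hi, view_of_lt _ _ (by omega), view_of_lt _ _ hi]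
    have hoff : ∀ j k : ℕ, j < m → k < m → p.pos + j * δ = p.pos + k * δ → j = k :=
      fun j k hj hk hjk => (natCast_mul_inj hδ hj hk).mp (add_left_cancel hjk)
    have hp0 : p.pos = p.pos + ((0 : ℕ) : Fin m) * δ := by simp
    have hq1 : q.pos = p.pos + ((1 : ℕ) : Fin m) * δ := by simp [hq]
    have hu : q.pos + i * δ = p.pos + ((i + 1 : ℕ) : Fin m) * δ := by rw [hq]; push_cast; ring
    have hv : q.pos + (i + 1) * δ = p.pos + ((i + 2 : ℕ) : Fin m) * δ := by
      rw [hq]; push_cast; ring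
    have hv' :
        p.pos + (((i + 1 : ℕ) : Fin m) + 1) * δ = p.pos + ((i + 2 : ℕ) : Fin m) * δ := by
      push_cast; ring
    rw [hu, hv, hv']
    refine h.2.2 _ _ ?_
    rintro (⟨h1, -⟩ | ⟨h1, h2⟩)
    · exact absurd (hoff _ _ hi (NeZero.pos m) (h1.trans hp0)) (by omega)
    · obtain rfl : i = 0 := by have := hoff _ _ hi (by omega) (h1.trans hq1); omega
      exact absurd (hoff _ _ (by omega) (NeZero.pos m) (h2.trans hp0)) (by omega)
  · rw [shift_of_eq hi, view_of_lt _ _ (by omega)]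
    have hwrap : (i : Fin m) + 1 = 0 := by rw [← Nat.cast_add_one, hi, Fin.natCast_self]
    congr 1
    · rw [hq]; linear_combination δ * hwrap
    · rw [hq]; linear_combination δ * hwrap
  · rw [shift, view, if_neg (by omega), if_neg (by omega), if_neg (by omega)]

lemma val_add_one_eq_iff (u v : Fin m) : (u.val + 1) % m = v.val ↔ v = u + 1 := by
  rw [Fin.ext_iff, Fin.val_add, Fin.val_one', Nat.add_mod_mod, eq_comm]

lemma onCycle_cycW (ω : ℕ → ℕ) (s : Fin m) : OnCycle ⟨cycW m ω, cycW_symm m ω, s⟩ := by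
  intro u v huv
  by_contra hne
  rw [not_or, ← val_add_one_eq_iff, eq_sub_iff_add_eq, @eq_comm _ (v + 1),
    ← val_add_one_eq_iff] at hne
  simp [cycW, hne.1, hne.2] at huv

lemma cycW_add_one (hm : 3 ≤ m) (ω : ℕ → ℕ) (u : Fin m) :
    cycW m ω u (u + 1) = ω u.val := by
  have hwrap : u + 1 + 1 ≠ u := by
    rw [add_assoc, Ne, add_eq_left, one_add_one_eq_two, ← Nat.cast_ofNat, Fin.natCast_eq_zero]
    exact fun h2 => by have := Nat.le_of_dvd two_pos h2; omega
  rw [cycW, if_pos ((val_add_one_eq_iff _ _).mpr rfl),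
    if_neg ((val_add_one_eq_iff (u + 1) u).not.mpr hwrap.symm), add_zero]

lemma view_cycW_one (hm : 3 ≤ m) (ω : ℕ → ℕ) (s : Fin m) {i : ℕ} (hi : i < m) :
    view ⟨cycW m ω, cycW_symm m ω, s⟩ 1 i = ω (s + i).val := by
  rw [view_of_lt _ _ hi, mul_one, mul_one, ← add_assoc]
  exact cycW_add_one hm ω _

end Views

section Balance

open Fin.CommRing

variable {n : ℕ} [NeZero (2 * n)]

def BalancedPos (n : ℕ) [NeZero (2 * n)] (p : NimPos (Fin (2 * n))) : Prop :=
  OnCycle p ∧ Balanced n (view p 1)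

lemma balanced_view_neg (p : NimPos (Fin (2 * n))) (δ : Fin (2 * n)) :
    Balanced n (view p (-δ)) ↔ Balanced n (view p δ) := by
  have h := view_neg p δ
  have h' : view p δ = rev (2 * n) (view p (-δ)) := by rw [← view_neg, neg_neg]
  constructor
  · intro hb
    rw [h']
    exact balanced_rev hb (by rw [← h', ← h])
  · intro hb
    rw [h]
    exact balanced_rev hb (by rw [← h, ← h'])

lemma balanced_view_iff {p : NimPos (Fin (2 * n))} {δ : Fin (2 * n)} (hδ : δ = 1 ∨ δ = -1) :
    Balanced n (view p δ) ↔ Balanced n (view p 1) := by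
  rcases hδ with rfl | rfl
  exacts [Iff.rfl, balanced_view_neg p 1]

lemma exists_nimMove_balancedPos (hn : 2 ≤ n) {q : NimPos (Fin (2 * n))} (hq : OnCycle q)
    {ε : Fin (2 * n)} (hε : ε = 1 ∨ ε = -1) {b : ℕ} (hb : b < view q ε 0)
    (hbal : Balanced n (shift (2 * n) (view q ε) b)) :
    ∃ r, NimMove q r ∧ BalancedPos n r := by
  have : Nontrivial (Fin (2 * n)) := Fin.nontrivial_iff_two_le.mpr (by omega)
  have hε' := isUnit_of_eq_one_or_eq_neg_one hε
  have hmove : NimMove q (q.moveTo (q.pos + ε) b) :=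
    NimPos.nimMove_moveTo (by simpa using hε'.ne_zero) (by rwa [← view_zero])
  refine ⟨_, hmove, hq.of_nimMove hmove, ?_⟩
  rw [← balanced_view_iff hε, view_of_nimMove (by omega) hε' hmove rfl]
  simpa [NimPos.moveTo] using hbal

lemma BalancedPos.exists_response (hn : 2 ≤ n) {p q : NimPos (Fin (2 * n))}
    (hp : BalancedPos n p) (h : NimMove p q) : ∃ r, NimMove q r ∧ BalancedPos n r := by
  obtain ⟨hcyc, hbal⟩ := hp
  obtain ⟨δ, hδ, hqδ⟩ :
      ∃ δ : Fin (2 * n), (δ = 1 ∨ δ = -1) ∧ q.pos = p.pos + δ := by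
    rcases hcyc p.pos q.pos (h.2.1.trans_le' (Nat.zero_le _)) with h1 | h1
    exacts [⟨1, Or.inl rfl, h1⟩, ⟨-1, Or.inr rfl, by rw [h1, sub_eq_add_neg]⟩]
  have hδ' := isUnit_of_eq_one_or_eq_neg_one hδ
  have ha : q.w p.pos q.pos < view p δ 0 := by rw [view_zero, ← hqδ]; exact h.2.1
  obtain ⟨z, hz, b, hb, hzb⟩ := ((balanced_view_iff hδ).mpr hbal).exists_response hn ha
  rw [← view_of_nimMove (by omega) hδ' h hqδ, ← view_neg] at hz
  rcases hz with rfl | rfl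
  · exact exists_nimMove_balancedPos hn (hcyc.of_nimMove h) hδ hb hzb
  · refine exists_nimMove_balancedPos hn (hcyc.of_nimMove h) ?_ hb hzb
    rcases hδ with rfl | rfl <;> simp

end Balance

end CycleNim

/-- Nim on the even cycle `C_{2n}` with every edge of the same
weight `k ≥ 1`: from any starting vertex the second player wins. -/
theorem stmt4 (n k : ℕ) (hn : 2 ≤ n) (hk : 1 ≤ k) (s : Fin (2*n)) :
    MoverLoses ⟨cycW (2*n) (fun _ => k), cycW_symm (2*n) (fun _ => k), s⟩ := by
  have : NeZero (2 * n) := ⟨by omega⟩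
  refine moverLoses_of_invariant (CycleNim.BalancedPos n)
    (fun _ _ hp h => hp.exists_response hn h)
    ⟨CycleNim.onCycle_cycW _ s, Or.inl fun i hi => ?_⟩
  rw [CycleNim.view_cycW_one (by omega) _ _ (by omega),
    CycleNim.view_cycW_one (by omega) _ _ (by omega)]
  exact ⟨rfl, hk⟩
end
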